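/- arXiv:1106.4222 — 2 statements merged into one kernel-verified Lean document; each statement's English description precedes it below -/
import Mathlib

section
/- If a sequence of real-valued random variables (X_n) converges stably in law to a mixed normal limit X = V·Z, where Z is standard normal independent of the sigma-field F, V is a strictly positive F-measurable random variable, and a sequence (V_n) of positive random variables converges in probability to V, then X_n / V_n converges in distribution to a standard normal random variable. -/
/-!
For an `F`-measurable `U`, `exp (i (s x + r U))` is the product of the bounded `F`-measurable
weight `exp (i r U)` and the bounded continuous function `exp (i s x)`, so stable convergence gives
convergence of the characteristic functions of `(Xₙ, U)`, and Lévy's continuity theorem gives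
`(Xₙ, U) ⇝ (V z, U)` with `z ~ N(0,1)` independent of `Ω`. Take `U = V⁻¹`: as `V > 0`,
`Vₙ⁻¹ → V⁻¹` in probability, so by Slutsky `(Xₙ, Vₙ⁻¹) ⇝ (V z, V⁻¹)`, and the map
`(x, u) ↦ u x` gives `Xₙ / Vₙ ⇝ V⁻¹ V z = z`. Using `V⁻¹` rather than `V` as the second
coordinate makes this final map continuous everywhere.
-/

open MeasureTheory ProbabilityTheory Filter Topology
open scoped BoundedContinuousFunction

/-- `X n` converges stably in law (with respect to the whole σ-field) to the mixed normal
limit `V·Z`, where `Z` is standard Gaussian independent of the σ-field.  The limit is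
realized on the product extension `Ω × ℝ`, the second marginal being `N(0,1)`:
for every bounded continuous `f` and bounded measurable weight `Z`,
`E[Z f(Xₙ)] → E'[Z f(V·z)]`. -/
def StablyToMixedNormal {Ω : Type*} [MeasurableSpace Ω] (P : Measure Ω)
    (X : ℕ → Ω → ℝ) (V : Ω → ℝ) : Prop :=
  ∀ (f : BoundedContinuousFunction ℝ ℝ) (Z : Ω → ℝ), Measurable Z →
    (∃ C, ∀ ω, |Z ω| ≤ C) →
    Tendsto (fun n => ∫ ω, Z ω * f (X n ω) ∂P) atTop
      (nhds (∫ ω, ∫ z, Z ω * f (V ω * z) ∂(gaussianReal 0 1) ∂P))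

namespace MeasureTheory

theorem TendstoInMeasure.comp_continuousAt {α E F : Type*} [MeasurableSpace α] {μ : Measure α}
    [IsFiniteMeasure μ] [PseudoEMetricSpace E] [PseudoEMetricSpace F]
    {f : ℕ → α → E} {g : α → E} {h : E → F} (hfg : TendstoInMeasure μ f atTop g)
    (hh : ∀ᵐ x ∂μ, ContinuousAt h (g x))
    (hhf : ∀ n, AEStronglyMeasurable (fun x => h (f n x)) μ) :
    TendstoInMeasure μ (fun n x => h (f n x)) atTop (fun x => h (g x)) := by
  refine (exists_seq_tendstoInMeasure_atTop_iff hhf).2 fun ns hns => ?_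
  obtain ⟨ns', hns', hae⟩ := (hfg.comp hns.tendsto_atTop).exists_seq_tendsto_ae
  exact ⟨ns', hns', by filter_upwards [hae, hh] with x hx hcont using hcont.tendsto.comp hx⟩

theorem TendstoInDistribution.tendsto_integral {ι Ω Ω' E : Type*} {mΩ : MeasurableSpace Ω}
    {mΩ' : MeasurableSpace Ω'} [TopologicalSpace E] [MeasurableSpace E] [OpensMeasurableSpace E]
    {μ : Measure Ω} [IsProbabilityMeasure μ] {μ' : Measure Ω'} [IsProbabilityMeasure μ']
    {X : ι → Ω → E} {Z : Ω' → E} {l : Filter ι}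
    (h : TendstoInDistribution X l Z (fun _ => μ) μ') (f : E →ᵇ ℝ) :
    Tendsto (fun n => ∫ ω, f (X n ω) ∂μ) l (𝓝 (∫ ω, f (Z ω) ∂μ')) := by
  have := ProbabilityMeasure.tendsto_iff_forall_integral_tendsto.mp h.tendsto f
  simp only [ProbabilityMeasure.coe_mk] at this
  rwa [integral_map h.aemeasurable_limit f.continuous.aestronglyMeasurable, funext fun n =>
    integral_map (h.forall_aemeasurable n) f.continuous.aestronglyMeasurable] at this

end MeasureTheory

open Complex in
theorem integral_cexp_ofReal_mul_I {α : Type*} [MeasurableSpace α] (μ : Measure α)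
    [IsFiniteMeasure μ] {θ : α → ℝ} (hθ : Measurable θ) :
    ∫ a, cexp (θ a * I) ∂μ = (∫ a, Real.cos (θ a) ∂μ : ℝ) + (∫ a, Real.sin (θ a) ∂μ : ℝ) * I := by
  have hcos : Integrable (fun a => Real.cos (θ a)) μ :=
    .of_bound (by fun_prop) 1 (ae_of_all _ fun a => by simpa using Real.abs_cos_le_one _)
  have hsin : Integrable (fun a => Real.sin (θ a)) μ :=
    .of_bound (by fun_prop) 1 (ae_of_all _ fun a => by simpa using Real.abs_sin_le_one _)
  simp_rw [exp_mul_I, ← ofReal_cos, ← ofReal_sin]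
  rw [integral_add, integral_mul_const, integral_complex_ofReal, integral_complex_ofReal]
  · exact hcos.ofReal
  · exact hsin.ofReal.mul_const I

theorem integrable_mul_comp_of_bounded {α : Type*} [MeasurableSpace α] {μ : Measure α}
    [IsFiniteMeasure μ] {Z Y : α → ℝ} {f : ℝ → ℝ} (hZ : Measurable Z)
    (hZb : ∃ C, ∀ a, |Z a| ≤ C) (hf : Continuous f) (hfb : ∃ C, ∀ x, |f x| ≤ C)
    (hY : Measurable Y) : Integrable (fun a => Z a * f (Y a)) μ := by
  obtain ⟨C, hC⟩ := hZb
  obtain ⟨D, hD⟩ := hfb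
  exact (Integrable.of_bound (by fun_prop) D (ae_of_all _ fun a => hD (Y a))).bdd_mul
    hZ.aestronglyMeasurable (ae_of_all _ hC)

theorem integrable_fst_mul_comp_mul_snd {Ω : Type*} [MeasurableSpace Ω] {P : Measure Ω}
    [IsFiniteMeasure P] {V Z : Ω → ℝ} {f : ℝ → ℝ} (hV : Measurable V) (hZ : Measurable Z)
    (hZb : ∃ C, ∀ ω, |Z ω| ≤ C) (hf : Continuous f) (hfb : ∃ C, ∀ x, |f x| ≤ C) :
    Integrable (fun p : Ω × ℝ => Z p.1 * f (V p.1 * p.2)) (P.prod (gaussianReal 0 1)) :=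
  integrable_mul_comp_of_bounded (Z := fun p : Ω × ℝ => Z p.1) (by fun_prop)
    (hZb.imp fun _ hC p => hC p.1) hf hfb (by fun_prop)

namespace StablyToMixedNormal

variable {Ω : Type*} [MeasurableSpace Ω] {P : Measure Ω} {X : ℕ → Ω → ℝ} {V : Ω → ℝ}

theorem tendsto_integral_prod [IsFiniteMeasure P] (hs : StablyToMixedNormal P X V)
    (hV : Measurable V) {Z : Ω → ℝ} {f : ℝ → ℝ} (hZ : Measurable Z) (hZb : ∃ C, ∀ ω, |Z ω| ≤ C)
    (hf : Continuous f) (hfb : ∃ C, ∀ x, |f x| ≤ C) :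
    Tendsto (fun n => ∫ ω, Z ω * f (X n ω) ∂P) atTop
      (𝓝 (∫ p, Z p.1 * f (V p.1 * p.2) ∂(P.prod (gaussianReal 0 1)))) := by
  rw [integral_prod _ (integrable_fst_mul_comp_mul_snd hV hZ hZb hf hfb)]
  obtain ⟨C, hC⟩ := hfb
  simpa using hs (.ofNormedAddCommGroup f hf C hC) Z hZ hZb

theorem tendsto_integral_mul_add_mul [IsFiniteMeasure P] (hs : StablyToMixedNormal P X V)
    (hX : ∀ n, Measurable (X n)) (hV : Measurable V) {Z₁ Z₂ : Ω → ℝ} {f₁ f₂ : ℝ → ℝ}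
    (hZ₁ : Measurable Z₁) (hZ₁b : ∃ C, ∀ ω, |Z₁ ω| ≤ C) (hf₁ : Continuous f₁)
    (hf₁b : ∃ C, ∀ x, |f₁ x| ≤ C) (hZ₂ : Measurable Z₂) (hZ₂b : ∃ C, ∀ ω, |Z₂ ω| ≤ C)
    (hf₂ : Continuous f₂) (hf₂b : ∃ C, ∀ x, |f₂ x| ≤ C) :
    Tendsto (fun n => ∫ ω, (Z₁ ω * f₁ (X n ω) + Z₂ ω * f₂ (X n ω)) ∂P) atTop
      (𝓝 (∫ p, (Z₁ p.1 * f₁ (V p.1 * p.2) + Z₂ p.1 * f₂ (V p.1 * p.2))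
        ∂(P.prod (gaussianReal 0 1)))) := by
  have hlim := (hs.tendsto_integral_prod hV hZ₁ hZ₁b hf₁ hf₁b).add
    (hs.tendsto_integral_prod hV hZ₂ hZ₂b hf₂ hf₂b)
  rw [← integral_add (integrable_fst_mul_comp_mul_snd hV hZ₁ hZ₁b hf₁ hf₁b)
    (integrable_fst_mul_comp_mul_snd hV hZ₂ hZ₂b hf₂ hf₂b)] at hlim
  refine hlim.congr fun n => (integral_add ?_ ?_).symm
  · exact integrable_mul_comp_of_bounded hZ₁ hZ₁b hf₁ hf₁b (hX n)
  · exact integrable_mul_comp_of_bounded hZ₂ hZ₂b hf₂ hf₂b (hX n)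

open Complex in
theorem tendsto_integral_cexp [IsFiniteMeasure P] (hs : StablyToMixedNormal P X V)
    (hX : ∀ n, Measurable (X n)) (hV : Measurable V) {U : Ω → ℝ} (hU : Measurable U)
    (s r : ℝ) :
    Tendsto (fun n => ∫ ω, cexp (↑(s * X n ω + r * U ω) * I) ∂P) atTop
      (𝓝 (∫ p, cexp (↑(s * (V p.1 * p.2) + r * U p.1) * I)
        ∂(P.prod (gaussianReal 0 1)))) := by
  have hcos := hs.tendsto_integral_mul_add_mul hX hV (Z₁ := fun ω => Real.cos (r * U ω))
    (f₁ := fun x => Real.cos (s * x)) (Z₂ := fun ω => -Real.sin (r * U ω))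
    (f₂ := fun x => Real.sin (s * x)) (by fun_prop) ⟨1, fun _ => Real.abs_cos_le_one _⟩
    (by fun_prop) ⟨1, fun _ => Real.abs_cos_le_one _⟩ (by fun_prop)
    ⟨1, fun _ => by simpa using Real.abs_sin_le_one _⟩ (by fun_prop)
    ⟨1, fun _ => Real.abs_sin_le_one _⟩
  have hsin := hs.tendsto_integral_mul_add_mul hX hV (Z₁ := fun ω => Real.sin (r * U ω))
    (f₁ := fun x => Real.cos (s * x)) (Z₂ := fun ω => Real.cos (r * U ω))
    (f₂ := fun x => Real.sin (s * x)) (by fun_prop) ⟨1, fun _ => Real.abs_sin_le_one _⟩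
    (by fun_prop) ⟨1, fun _ => Real.abs_cos_le_one _⟩ (by fun_prop)
    ⟨1, fun _ => Real.abs_cos_le_one _⟩ (by fun_prop) ⟨1, fun _ => Real.abs_sin_le_one _⟩
  simp only [neg_mul, ← sub_eq_add_neg] at hcos
  rw [funext fun n => integral_cexp_ofReal_mul_I P (by fun_prop),
    integral_cexp_ofReal_mul_I _ (by fun_prop)]
  simp only [add_comm (s * _), Real.cos_add, Real.sin_add]
  exact ((continuous_ofReal.tendsto _).comp hcos).add
    (((continuous_ofReal.tendsto _).comp hsin).mul_const I)

theorem tendstoInDistribution_prodMk [IsProbabilityMeasure P] (hs : StablyToMixedNormal P X V)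
    (hX : ∀ n, Measurable (X n)) (hV : Measurable V) {U : Ω → ℝ} (hU : Measurable U) :
    TendstoInDistribution (fun n ω => (X n ω, U ω)) atTop
      (fun p : Ω × ℝ => (V p.1 * p.2, U p.1)) (fun _ => P) (P.prod (gaussianReal 0 1)) := by
  have hL2 : TendstoInDistribution (fun n ω => WithLp.toLp 2 (X n ω, U ω)) atTop
      (fun p : Ω × ℝ => WithLp.toLp 2 (V p.1 * p.2, U p.1)) (fun _ => P)
      (P.prod (gaussianReal 0 1)) := by
    -- Lévy's theorem is stated on inner product spaces, hence `WithLp 2 (ℝ × ℝ)`.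
    refine ⟨fun n => by fun_prop, by fun_prop,
      ProbabilityMeasure.tendsto_of_tendsto_charFun fun t => ?_⟩
    simp only [ProbabilityMeasure.coe_mk, charFun_apply, WithLp.prod_inner_apply]
    rw [funext fun n => integral_map (by fun_prop) (by fun_prop),
      integral_map (by fun_prop) (by fun_prop)]
    simpa [mul_comm] using hs.tendsto_integral_cexp hX hV hU t.ofLp.1 t.ofLp.2
  exact hL2.continuous_comp (WithLp.prod_continuous_ofLp 2 ℝ ℝ)

end StablyToMixedNormal

theorem stmt0_general {Ω : Type*} [MeasurableSpace Ω] (P : Measure Ω) [IsProbabilityMeasure P]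
    (X : ℕ → Ω → ℝ) (V : Ω → ℝ) (Vn : ℕ → Ω → ℝ)
    (hXmeas : ∀ n, Measurable (X n)) (hVmeas : Measurable V)
    (hVnmeas : ∀ n, Measurable (Vn n))
    (hVpos : ∀ ω, 0 < V ω)
    (hstable : StablyToMixedNormal P X V)
    (hVn : TendstoInMeasure P Vn atTop V) :
    ∀ f : BoundedContinuousFunction ℝ ℝ,
      Tendsto (fun n => ∫ ω, f (X n ω / Vn n ω) ∂P) atTop
        (nhds (∫ z, f z ∂(gaussianReal 0 1))) := by
  intro f
  have hjoint := hstable.tendstoInDistribution_prodMk hXmeas hVmeas hVmeas.inv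
  have hinv : TendstoInMeasure P (fun n ω => (Vn n ω)⁻¹) atTop (fun ω => (V ω)⁻¹) :=
    hVn.comp_continuousAt (ae_of_all _ fun ω => continuousAt_inv₀ (hVpos ω).ne')
      fun n => (hVnmeas n).inv.aestronglyMeasurable
  have hslutsky : TendstoInDistribution (fun n ω => (X n ω, (Vn n ω)⁻¹)) atTop
      (fun p : Ω × ℝ => (V p.1 * p.2, (V p.1)⁻¹)) (fun _ => P) (P.prod (gaussianReal 0 1)) := by
    refine tendstoInDistribution_of_tendstoInMeasure_sub _ _ hjoint ?_
      fun n => ((hXmeas n).prodMk (hVnmeas n).inv).aemeasurable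
    rw [tendstoInMeasure_iff_norm] at hinv ⊢
    simpa [Prod.norm_def] using hinv
  have hratio := (hslutsky.continuous_comp (g := fun q : ℝ × ℝ => q.2 * q.1)
    (by fun_prop)).tendsto_integral f
  simpa [div_eq_inv_mul, inv_mul_cancel_left₀ (hVpos _).ne', integral_fun_snd] using hratio

/-- If `Xₙ` converges stably in law to the mixed normal `V·Z` with `V` strictly positive
and measurable, and `Vₙ → V` in probability with `Vₙ > 0`, then `Xₙ / Vₙ` converges in
distribution to a standard normal random variable. -/
theorem stmt0 {Ω : Type*} [MeasurableSpace Ω] (P : Measure Ω) [IsProbabilityMeasure P]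
    (X : ℕ → Ω → ℝ) (V : Ω → ℝ) (Vn : ℕ → Ω → ℝ)
    (hXmeas : ∀ n, Measurable (X n)) (hVmeas : Measurable V)
    (hVnmeas : ∀ n, Measurable (Vn n))
    (hVpos : ∀ ω, 0 < V ω) (hVnpos : ∀ n ω, 0 < Vn n ω)
    (hstable : StablyToMixedNormal P X V)
    (hVn : TendstoInMeasure P Vn atTop V) :
    ∀ f : BoundedContinuousFunction ℝ ℝ,
      Tendsto (fun n => ∫ ω, f (X n ω / Vn n ω) ∂P) atTop
        (nhds (∫ z, f z ∂(gaussianReal 0 1))) :=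
  stmt0_general P X V Vn hXmeas hVmeas hVnmeas hVpos hstable hVn
end

section
/- For two strictly increasing finite sequences of observation times t_0 < t_1 < ... < t_n and τ_0 < τ_1 < ... < τ_m, the Hayashi–Yoshida double sum Σ_i Σ_j ΔX_{t_i} ΔY_{τ_j} 1{min(t_i,τ_j) > max(t_{i−1},τ_{j−1})} equals the single sum Σ_i ΔX_{t_i} (Y_{t_{i,+}} − Y_{t_{i−1,−}}), where t_{i,+} = min{τ_j : τ_j ≥ t_i} is the next-tick and t_{i,−} = max{τ_j : τ_j ≤ t_i} is the previous-tick interpolation time (assuming τ_0 ≤ t_0 ≤ t_n ≤ τ_m so the interpolations exist). -/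
/-!
Fix `i` and put `s = tᵢ₋₁ < u = tᵢ`. Since `τ` is increasing, the overlap condition
`max(s, τⱼ₋₁) < min(u, τⱼ)` says that `τⱼ₋₁ < u` but not `τⱼ ≤ s`, i.e. that `j - 1` lies in
`[b, a)`, where `τ_a = min{τⱼ : u ≤ τⱼ}` and `τ_b = max{τⱼ : τⱼ ≤ s}`. So the inner sum over `j`
telescopes to `Y(τ_a) - Y(τ_b)`.
-/

open Finset
open scoped Classical

theorem Fin.sum_ite_castSucc_lt_sub {M : Type*} [AddCommGroup M] {m : ℕ}
    (f : Fin (m + 1) → M) (a : Fin (m + 1)) :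
    ∑ j : Fin m, (if j.castSucc < a then f j.succ - f j.castSucc else 0) = f a - f 0 := by
  induction a using Fin.induction with
  | zero => simp
  | succ i ih =>
    have hsplit : ∀ j : Fin m, (if j.castSucc < i.succ then f j.succ - f j.castSucc else 0) =
        (if j.castSucc < i.castSucc then f j.succ - f j.castSucc else 0) +
          if j = i then f j.succ - f j.castSucc else 0 := by
      intro j
      rcases lt_trichotomy j i with h | rfl | h
      · simp [h, h.ne, Fin.castSucc_lt_succ_iff, h.le]
      · simp
      · simp [h.ne', Fin.castSucc_lt_succ_iff, h.not_ge, h.not_gt]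
    rw [sum_congr rfl fun j _ => hsplit j, sum_add_distrib, ih, sum_ite_eq' univ i]
    simp

section NextPreviousTick

variable {ι α : Type*} [LinearOrder ι] [Finite ι] [ConditionallyCompleteLinearOrder α]
  {τ : ι → α}

theorem StrictMono.exists_csInf_setOf_le (hτ : StrictMono τ) {u : α} (hu : ∃ k, u ≤ τ k) :
    ∃ a, sInf {y | (∃ j, τ j = y) ∧ u ≤ y} = τ a ∧ ∀ j, τ j < u ↔ j < a := by
  set S := {y | (∃ j, τ j = y) ∧ u ≤ y}
  have hfin : S.Finite := (Set.finite_range τ).subset fun _ hy => hy.1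
  obtain ⟨k, hk⟩ := hu
  obtain ⟨⟨a, ha⟩, hua⟩ : sInf S ∈ S := Set.Nonempty.csInf_mem ⟨τ k, ⟨k, rfl⟩, hk⟩ hfin
  refine ⟨a, ha.symm, fun j => ⟨fun hj => hτ.lt_iff_lt.1 (hj.trans_le (ha ▸ hua)), fun hj => ?_⟩⟩
  by_contra! hj'
  exact (hτ.lt_iff_lt.2 hj).not_ge (ha ▸ csInf_le hfin.bddBelow ⟨⟨j, rfl⟩, hj'⟩)

theorem StrictMono.exists_csSup_setOf_le (hτ : StrictMono τ) {s : α} (hs : ∃ k, τ k ≤ s) :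
    ∃ b, sSup {y | (∃ j, τ j = y) ∧ y ≤ s} = τ b ∧ ∀ j, τ j ≤ s ↔ j ≤ b := by
  set S := {y | (∃ j, τ j = y) ∧ y ≤ s}
  have hfin : S.Finite := (Set.finite_range τ).subset fun _ hy => hy.1
  obtain ⟨k, hk⟩ := hs
  obtain ⟨⟨b, hb⟩, hbs⟩ : sSup S ∈ S := Set.Nonempty.csSup_mem ⟨τ k, ⟨k, rfl⟩, hk⟩ hfin
  refine ⟨b, hb.symm, fun j => ⟨fun hj => ?_, fun hj => (hτ.monotone hj).trans (hb ▸ hbs)⟩⟩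
  exact hτ.le_iff_le.1 (hb ▸ le_csSup hfin.bddAbove ⟨⟨j, rfl⟩, hj⟩)

end NextPreviousTick

theorem sum_sub_mul_ite_overlap {α R : Type*} [LinearOrder α] [Ring R] {m : ℕ}
    {τ : Fin (m + 1) → α} (hτ : StrictMono τ) (Y : α → R) {s u : α} (hsu : s < u)
    {a b : Fin (m + 1)} (ha : ∀ j, τ j < u ↔ j < a) (hb : ∀ j, τ j ≤ s ↔ j ≤ b) :
    ∑ j : Fin m, (Y (τ j.succ) - Y (τ j.castSucc)) *
        (if max s (τ j.castSucc) < min u (τ j.succ) then 1 else 0) = Y (τ a) - Y (τ b) := by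
  have hoverlap : ∀ j : Fin m,
      max s (τ j.castSucc) < min u (τ j.succ) ↔ j.castSucc < a ∧ ¬ j.castSucc < b := by
    intro j
    have := hτ j.castSucc_lt_succ
    rw [max_lt_iff, lt_min_iff, lt_min_iff, ← ha, Fin.castSucc_lt_iff_succ_le, ← hb, not_le]
    tauto
  have hba : b < a := (ha b).1 (((hb b).2 le_rfl).trans_lt hsu)
  have hsplit : ∀ j : Fin m, (Y (τ j.succ) - Y (τ j.castSucc)) *
      (if max s (τ j.castSucc) < min u (τ j.succ) then 1 else 0) =
        (if j.castSucc < a then Y (τ j.succ) - Y (τ j.castSucc) else 0) -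
          if j.castSucc < b then Y (τ j.succ) - Y (τ j.castSucc) else 0 := by
    intro j
    simp only [hoverlap]
    by_cases hjb : j.castSucc < b
    · simp [hjb, hjb.trans hba]
    · by_cases hja : j.castSucc < a <;> simp [hja, hjb]
  rw [sum_congr rfl fun j _ => hsplit j, sum_sub_distrib,
    Fin.sum_ite_castSucc_lt_sub (fun k => Y (τ k)), Fin.sum_ite_castSucc_lt_sub (fun k => Y (τ k)),
    sub_sub_sub_cancel_right]

/-- The Hayashi–Yoshida double sum over all products of increments with overlapping
observation intervals equals the single sum of increments of `X` multiplied with the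
next-tick / previous-tick interpolated increments of `Y`:
`Σᵢ Σⱼ ΔX_{tᵢ} ΔY_{τⱼ} 1{min(tᵢ,τⱼ) > max(tᵢ₋₁,τⱼ₋₁)} = Σᵢ ΔX_{tᵢ} (Y_{tᵢ,₊} − Y_{tᵢ₋₁,₋})`,
where `tᵢ,₊ = min{τⱼ : τⱼ ≥ tᵢ}` and `tᵢ,₋ = max{τⱼ : τⱼ ≤ tᵢ}`, which exist since
`τ₀ ≤ t₀` and `tₙ ≤ τₘ`. -/
theorem stmt3 {n m : ℕ} (t : Fin (n + 1) → ℝ) (τ : Fin (m + 1) → ℝ)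
    (ht : StrictMono t) (hτ : StrictMono τ) (X Y : ℝ → ℝ)
    (h0 : τ 0 ≤ t 0) (h1 : t (Fin.last n) ≤ τ (Fin.last m)) :
    (∑ i : Fin n, ∑ j : Fin m,
        (X (t i.succ) - X (t i.castSucc)) * (Y (τ j.succ) - Y (τ j.castSucc)) *
          (if max (t i.castSucc) (τ j.castSucc) < min (t i.succ) (τ j.succ) then 1 else 0))
      = ∑ i : Fin n,
          (X (t i.succ) - X (t i.castSucc)) *
            (Y (sInf {y : ℝ | (∃ j, τ j = y) ∧ t i.succ ≤ y}) -
             Y (sSup {y : ℝ | (∃ j, τ j = y) ∧ y ≤ t i.castSucc})) := by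
  refine sum_congr rfl fun i _ => ?_
  obtain ⟨a, hInf, ha⟩ :=
    hτ.exists_csInf_setOf_le ⟨Fin.last m, (ht.monotone (Fin.le_last _)).trans h1⟩
  obtain ⟨b, hSup, hb⟩ := hτ.exists_csSup_setOf_le ⟨0, h0.trans (ht.monotone (Fin.zero_le _))⟩
  rw [hInf, hSup, ← sum_sub_mul_ite_overlap hτ Y (ht i.castSucc_lt_succ) ha hb, mul_sum]
  exact sum_congr rfl fun j _ => mul_assoc _ _ _
end
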